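/- Let c_1,…,c_n be reals with c_1 = 0 and c_n = 1, and let d_1,…,d_n be reals with d_1 = d_n = 1 and d_i ≠ 0 for all i. Set A = F·D, Ã = T·(D·A·G)ᵀ·T, C = diag(c_1,…,c_n), and C̃ = I − T·C·T. Then Tr(P·Ã·C̃·C̃) = Tr(P·A·C) − Tr(P·A·C·C) + Tr(P·A·A·C). -/

import Mathlib

open Finset Matrix
/-- The matrix `D` with entries `d_{ij}`: `0` for `i < j`, `d_i` for `i = j`, and
`-d_j · (∏_{k=j+1}^{i-1} (1 - d_k)) · d_i` for `i > j`. -/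
def Dmat (n : ℕ) (d : Fin n → ℝ) : Matrix (Fin n) (Fin n) ℝ :=
  Matrix.of fun i j =>
    if i < j then 0
    else if i = j then d i
    else -(d j) * (∏ k ∈ Finset.Ioo j i, (1 - d k)) * d i

/-- The lower-triangular matrix `G` with `G_{ii} = 1/d_i`, `G_{ij} = 1` for `i > j`. -/
noncomputable def Gmat (n : ℕ) (d : Fin n → ℝ) : Matrix (Fin n) (Fin n) ℝ :=
  Matrix.of fun i j => if i = j then 1 / d i else if j < i then 1 else 0

/-- The matrix `F` with `F_{ij} = c_i - c_j` for `i > j` and `0` otherwise. -/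
def Fmat (n : ℕ) (c : Fin n → ℝ) : Matrix (Fin n) (Fin n) ℝ :=
  Matrix.of fun i j => if j < i then c i - c j else 0

/-- The antidiagonal permutation matrix `T`, `T_{ij} = 1` iff `i + j = n + 1` (1-based). -/
def Tmat (n : ℕ) : Matrix (Fin n) (Fin n) ℝ :=
  Matrix.of fun i j => if (i : ℕ) + (j : ℕ) + 1 = n then 1 else 0

/-- The matrix `P` whose last column consists of ones and all other entries are `0`. -/
def Pmat (n : ℕ) : Matrix (Fin n) (Fin n) ℝ :=
  Matrix.of fun _ j => if (j : ℕ) + 1 = n then 1 else 0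


/-!
With `L` the strictly lower-triangular all-ones matrix, `G = diag(1/d) + L`, and the telescoping
identity `∏ (1 - d_k) = 1 - ∑_k d_k ∏_{l<k} (1 - d_l)` shows `G D = 1`. Since `F = C G - G C`,
this gives `D A = D F D = D C - C D` and `D A G = D F`, whose first column is `D c` because
`c_1 = 0`. As `d_n = 1`, the last row of `G` is all ones, so the column sums of `D` are `e_n`, and
with `c_n = 1` the last row of `A` is `e_nᵀ - cᵀ D`. Each `Tr(P M)` is the sum of the last row
of `M`, and both sides of the identity reduce to `1 - 2 cᵀ D c + (c²)ᵀ D c`.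
-/

section

variable {n : ℕ}

theorem Dmat_apply_of_lt (d : Fin n → ℝ) {i j : Fin n} (h : i < j) : Dmat n d i j = 0 := by
  simp [Dmat, h]

theorem Dmat_apply_self (d : Fin n → ℝ) (i : Fin n) : Dmat n d i i = d i := by
  simp [Dmat]

theorem Dmat_apply_of_gt (d : Fin n → ℝ) {i j : Fin n} (h : j < i) :
    Dmat n d i j = -d j * (∏ k ∈ Ioo j i, (1 - d k)) * d i := by
  simp [Dmat, h.not_gt, h.ne']

theorem Gmat_mul_apply (d : Fin n → ℝ) (M : Matrix (Fin n) (Fin n) ℝ) (i j : Fin n) :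
    (Gmat n d * M) i j = M i j / d i + ∑ k ∈ Iio i, M k j := by
  have hG : ∀ k, Gmat n d i k * M k j =
      (if i = k then M k j / d i else 0) + if k < i then M k j else 0 := by
    intro k
    rcases eq_or_ne i k with rfl | hik
    · simp [Gmat]
      ring
    · simp [Gmat, hik]
  simp only [mul_apply, hG, sum_add_distrib, sum_ite_eq, mem_univ, if_true, ← sum_filter]
  congr 2
  ext k
  simp

theorem sum_Iio_Dmat_apply (d : Fin n → ℝ) {i j : Fin n} (hji : j < i) :
    ∑ k ∈ Iio i, Dmat n d k j = d j * ∏ k ∈ Ioo j i, (1 - d k) := by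
  calc ∑ k ∈ Iio i, Dmat n d k j = ∑ k ∈ Ico j i, Dmat n d k j := by
        refine (sum_subset Ico_subset_Iio_self fun k hki hkj => Dmat_apply_of_lt d ?_).symm
        simp only [mem_Iio, mem_Ico, not_and, not_lt] at hki hkj
        exact lt_of_not_ge fun h => (hkj h).not_gt hki
    _ = d j * (1 - ∑ k ∈ Ioo j i, d k * ∏ l ∈ Ioo j i with l < k, (1 - d l)) := by
        rw [← Ioo_insert_left hji, sum_insert (by simp), Dmat_apply_self, mul_sub, mul_one,
          sub_eq_add_neg, mul_sum, ← sum_neg_distrib]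
        congr 1
        refine sum_congr rfl fun k hk => ?_
        rw [Ioo_filter_lt, min_eq_right (mem_Ioo.mp hk).2.le, Dmat_apply_of_gt d (mem_Ioo.mp hk).1]
        ring
    _ = d j * ∏ k ∈ Ioo j i, (1 - d k) := by rw [prod_one_sub_ordered]

theorem Gmat_mul_Dmat {d : Fin n → ℝ} (hd : ∀ i, d i ≠ 0) : Gmat n d * Dmat n d = 1 := by
  ext i j
  rw [Gmat_mul_apply, one_apply]
  rcases lt_trichotomy j i with h | rfl | h
  · rw [sum_Iio_Dmat_apply d h, Dmat_apply_of_gt d h, if_neg h.ne']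
    field_simp [hd i]
    ring
  · rw [Dmat_apply_self, div_self (hd j), if_pos rfl,
      sum_eq_zero fun k hk => Dmat_apply_of_lt d (mem_Iio.mp hk), add_zero]
  · rw [Dmat_apply_of_lt d h, if_neg h.ne,
      sum_eq_zero fun k hk => Dmat_apply_of_lt d ((mem_Iio.mp hk).trans h)]
    simp

theorem Dmat_mul_Gmat {d : Fin n → ℝ} (hd : ∀ i, d i ≠ 0) : Dmat n d * Gmat n d = 1 :=
  mul_eq_one_comm.mp (Gmat_mul_Dmat hd)

theorem Fmat_eq_diagonal_mul_Gmat_sub_Gmat_mul_diagonal (c d : Fin n → ℝ) :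
    Fmat n c = diagonal c * Gmat n d - Gmat n d * diagonal c := by
  ext i j
  simp only [Fmat, Gmat, of_apply, Matrix.sub_apply, diagonal_mul, mul_diagonal]
  rcases lt_trichotomy j i with h | rfl | h
  · simp [h, h.ne']
  · simp
    ring
  · simp [h.ne, h.not_gt]

theorem Dmat_mul_Fmat_mul_Dmat {d : Fin n → ℝ} (hd : ∀ i, d i ≠ 0) (c : Fin n → ℝ) :
    Dmat n d * Fmat n c * Dmat n d = Dmat n d * diagonal c - diagonal c * Dmat n d := by
  calc Dmat n d * Fmat n c * Dmat n d
        = Dmat n d * diagonal c * (Gmat n d * Dmat n d)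
          - Dmat n d * Gmat n d * diagonal c * Dmat n d := by
          rw [Fmat_eq_diagonal_mul_Gmat_sub_Gmat_mul_diagonal c d]
          noncomm_ring
    _ = Dmat n d * diagonal c - diagonal c * Dmat n d := by
          rw [Gmat_mul_Dmat hd, Dmat_mul_Gmat hd, mul_one, one_mul]

theorem Tmat_mul_mul_Tmat (M : Matrix (Fin n) (Fin n) ℝ) :
    Tmat n * M * Tmat n = M.submatrix Fin.rev Fin.rev := by
  have hT : ∀ i j : Fin n, Tmat n i j = if j = Fin.rev i then 1 else 0 := by
    intro i j
    simp only [Tmat, of_apply, Fin.ext_iff, Fin.val_rev]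
    congr 1
    apply propext
    omega
  have hT' : ∀ i j : Fin n, Tmat n i j = if i = Fin.rev j then 1 else 0 := fun i j => by
    rw [hT]
    exact if_congr (eq_comm.trans Fin.rev_eq_iff) rfl rfl
  have hTM : ∀ i j, (Tmat n * M) i j = M (Fin.rev i) j := by
    intro i j
    simp only [mul_apply, hT, ite_mul, one_mul, zero_mul, sum_ite_eq', mem_univ, if_true]
  ext i j
  rw [mul_apply]
  simp only [hTM, hT', mul_ite, mul_one, mul_zero, sum_ite_eq', mem_univ, if_true, submatrix_apply]

theorem one_sub_Tmat_mul_diagonal_mul_Tmat (c : Fin n → ℝ) :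
    1 - Tmat n * diagonal c * Tmat n = diagonal fun i => 1 - c (Fin.rev i) := by
  ext i j
  by_cases h : i = j <;> simp [Tmat_mul_mul_Tmat, one_apply, h]

end

section

variable {m : ℕ}

theorem trace_Pmat_mul_mul_diagonal (M : Matrix (Fin (m + 1)) (Fin (m + 1)) ℝ)
    (w : Fin (m + 1) → ℝ) :
    trace (Pmat (m + 1) * M * diagonal w) = M (Fin.last m) ⬝ᵥ w := by
  have hP : ∀ k : Fin (m + 1), (k : ℕ) + 1 = m + 1 ↔ k = Fin.last m := by
    simp [Fin.ext_iff]
  simp only [trace, diag_apply, mul_diagonal]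
  simp only [mul_apply, Pmat, of_apply, hP, ite_mul, one_mul, zero_mul, sum_ite_eq', mem_univ,
    if_true, dotProduct]

theorem Gmat_last {d : Fin (m + 1) → ℝ} (hd : d (Fin.last m) = 1) :
    Gmat (m + 1) d (Fin.last m) = 1 := by
  ext j
  rcases (Fin.le_last j).lt_or_eq with h | rfl
  · simp [Gmat, h, h.ne']
  · simp [Gmat, hd]

theorem one_vecMul_Dmat {d : Fin (m + 1) → ℝ} (hd : ∀ i, d i ≠ 0)
    (hdl : d (Fin.last m) = 1) :
    1 ᵥ* Dmat (m + 1) d = Pi.single (Fin.last m) 1 := by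
  rw [← Gmat_last hdl, ← mul_apply_eq_vecMul, Gmat_mul_Dmat hd]
  ext j
  simp [one_apply, Pi.single_apply, eq_comm]

theorem Fmat_last {c : Fin (m + 1) → ℝ} (hc : c (Fin.last m) = 1) :
    Fmat (m + 1) c (Fin.last m) = 1 - c := by
  ext j
  rcases (Fin.le_last j).lt_or_eq with h | rfl
  · simp [Fmat, h, hc]
  · simp [Fmat, hc]

theorem Fmat_mul_Dmat_last {c d : Fin (m + 1) → ℝ} (hd : ∀ i, d i ≠ 0)
    (hdl : d (Fin.last m) = 1) (hcl : c (Fin.last m) = 1) :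
    (Fmat (m + 1) c * Dmat (m + 1) d) (Fin.last m) =
      Pi.single (Fin.last m) 1 - c ᵥ* Dmat (m + 1) d := by
  rw [mul_apply_eq_vecMul, Fmat_last hcl, sub_vecMul, one_vecMul_Dmat hd hdl]

theorem Fmat_mul_Dmat_mul_self_last {c d : Fin (m + 1) → ℝ} (hd : ∀ i, d i ≠ 0)
    (hdl : d (Fin.last m) = 1) (hcl : c (Fin.last m) = 1) :
    (Fmat (m + 1) c * Dmat (m + 1) d * (Fmat (m + 1) c * Dmat (m + 1) d)) (Fin.last m) =
      (Fmat (m + 1) c * Dmat (m + 1) d) (Fin.last m) - (c ᵥ* Dmat (m + 1) d) * c +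
        (c * c) ᵥ* Dmat (m + 1) d := by
  rw [mul_apply_eq_vecMul]
  nth_rewrite 1 [Fmat_mul_Dmat_last hd hdl hcl]
  rw [sub_vecMul, single_one_vecMul, vecMul_vecMul, ← mul_assoc, Dmat_mul_Fmat_mul_Dmat hd,
    vecMul_sub, ← vecMul_vecMul, ← vecMul_vecMul, funext (vecMul_diagonal _ c),
    funext (vecMul_diagonal c c)]
  abel

theorem mul_Fmat_apply_zero (M : Matrix (Fin (m + 1)) (Fin (m + 1)) ℝ) {c : Fin (m + 1) → ℝ}
    (hc : c 0 = 0) (i : Fin (m + 1)) :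
    (M * Fmat (m + 1) c) i 0 = (M *ᵥ c) i := by
  have hF : ∀ k, Fmat (m + 1) c k 0 = c k := fun k => by
    rcases (Fin.zero_le k).lt_or_eq with h | rfl
    · simp [Fmat, h, hc]
    · simp [Fmat, hc]
  simp only [mul_apply, hF, mulVec, dotProduct]

end

theorem stmt_14 (n : ℕ) (hn : 2 ≤ n) (c d : Fin n → ℝ)
    (hc1 : c ⟨0, by omega⟩ = 0) (hcn : c ⟨n - 1, by omega⟩ = 1)
    (hdn : d ⟨n - 1, by omega⟩ = 1)
    (hd : ∀ i : Fin n, d i ≠ 0)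
    (A Atil C Ctil : Matrix (Fin n) (Fin n) ℝ)
    (hA : A = Fmat n c * Dmat n d)
    (hAtil : Atil = Tmat n * (Dmat n d * A * Gmat n d)ᵀ * Tmat n)
    (hC : C = Matrix.diagonal c)
    (hCtil : Ctil = 1 - Tmat n * C * Tmat n) :
    Matrix.trace (Pmat n * Atil * Ctil * Ctil) =
      Matrix.trace (Pmat n * A * C) - Matrix.trace (Pmat n * A * C * C) +
        Matrix.trace (Pmat n * A * A * C) := by
  obtain ⟨m, rfl⟩ : ∃ m, n = m + 1 := ⟨n - 1, by omega⟩
  have hcl : c (Fin.last m) = 1 := hcn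
  have hAtil_last : Atil (Fin.last m) = (Dmat (m + 1) d *ᵥ c) ∘ Fin.rev := by
    ext j
    rw [hAtil, hA, ← mul_assoc, mul_assoc _ (Dmat _ d), Dmat_mul_Gmat hd, mul_one,
      Tmat_mul_mul_Tmat, submatrix_apply, transpose_apply, Fin.rev_last]
    exact mul_Fmat_apply_zero _ hc1 _
  have hsum : ∀ w, (1 : Fin (m + 1) → ℝ) ᵥ* Dmat (m + 1) d ⬝ᵥ w = w (Fin.last m) := by
    intro w
    rw [one_vecMul_Dmat hd hdn, single_dotProduct, one_mul]
  have hassoc : ((c ᵥ* Dmat (m + 1) d) * c) ⬝ᵥ c = c ᵥ* Dmat (m + 1) d ⬝ᵥ (c * c) := by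
    simp only [dotProduct, Pi.mul_apply, mul_assoc]
  subst hC hCtil
  rw [one_sub_Tmat_mul_diagonal_mul_Tmat, mul_assoc _ (diagonal _), diagonal_mul_diagonal',
    mul_assoc _ (diagonal c), diagonal_mul_diagonal', mul_assoc (Pmat _) A A,
    trace_Pmat_mul_mul_diagonal, trace_Pmat_mul_mul_diagonal, trace_Pmat_mul_mul_diagonal,
    trace_Pmat_mul_mul_diagonal, hAtil_last, hA, Fmat_mul_Dmat_mul_self_last hd hdn hcl,
    Fmat_mul_Dmat_last hd hdn hcl]
  change (Dmat (m + 1) d *ᵥ c) ∘ Fin.revPerm ⬝ᵥ ((1 - c) * (1 - c)) ∘ Fin.revPerm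
    = _ ⬝ᵥ c - _ ⬝ᵥ (c * c) + _
  rw [comp_equiv_dotProduct_comp_equiv, dotProduct_comm, dotProduct_mulVec,
    show (1 - c) * (1 - c) = 1 - c - c + c * c by ring]
  simp only [add_vecMul, sub_vecMul, hsum, add_dotProduct, sub_dotProduct, single_dotProduct,
    hassoc, Pi.mul_apply, hcl]
  ring
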